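/- arXiv:2506.18180 — 4 statements merged into one kernel-verified Lean document; each statement's English description precedes it below -/
import Mathlib

section
/- For real β, δ with β + δ > 0 and α, γ > 0, the series ∑_{n=0}^∞ z^n / (Γ(α + nβ) Γ(γ + nδ)) converges absolutely for every complex number z. -/
/-!
Taking β ≤ δ (so δ > 0), for every `C` the denominator `|Γ(α + nβ) Γ(γ + nδ)|` eventually
exceeds a constant multiple of `Cⁿ`, so the series is dominated by a geometric one. The growth
comes from `Γ(x) x^⌊y - x⌋ ≤ Γ(y)` for `2 ≤ x ≤ y`, applied with `x → ∞` and `y - x` growing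
linearly in `n`. If `β ≥ 0`, take `x = (γ + nδ)/2`, `y = γ + nδ`; the factor `Γ(α + nβ)` is
bounded below. If `β < 0`, the reflection formula gives `π ≤ |Γ(a)| Γ(1 - a)`, and one takes
`x = 1 - α - nβ`, `y = γ + nδ`, whose difference grows like `(β + δ) n`. At the poles of `Γ`,
Mathlib's `Real.Gamma` vanishes and so does the term, since division by `0` gives `0`.
-/

open Real Filter

namespace Real

theorem Gamma_mul_pow_le_Gamma_add_nat {x : ℝ} (hx : 0 < x) (k : ℕ) :
    Gamma x * x ^ k ≤ Gamma (x + k) := by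
  induction k with
  | zero => simp
  | succ k ih =>
    have hxk : 0 < x + k := by positivity
    calc Gamma x * x ^ (k + 1) = x * (Gamma x * x ^ k) := by ring
      _ ≤ (x + k) * Gamma (x + k) := by
        gcongr
        linarith [k.cast_nonneg (α := ℝ)]
      _ = Gamma (x + ↑(k + 1)) := by
        rw [Nat.cast_succ, ← add_assoc, Gamma_add_one hxk.ne']

theorem Gamma_mul_pow_le_Gamma {x y : ℝ} {k : ℕ} (hx : 2 ≤ x) (hy : x + k ≤ y) :
    Gamma x * x ^ k ≤ Gamma y := by
  have hxk : 2 ≤ x + k := by linarith [k.cast_nonneg (α := ℝ)]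
  exact (Gamma_mul_pow_le_Gamma_add_nat (by linarith) k).trans
    (Gamma_strictMonoOn_Ici.monotoneOn hxk (hxk.trans hy) hy)

theorem one_le_Gamma {x : ℝ} (hx : 2 ≤ x) : 1 ≤ Gamma x := by
  simpa using Gamma_strictMonoOn_Ici.monotoneOn (Set.mem_Ici.2 le_rfl) hx hx

theorem pi_le_abs_Gamma_mul_Gamma_one_sub {x : ℝ} (h : Gamma x * Gamma (1 - x) ≠ 0) :
    π ≤ |Gamma x * Gamma (1 - x)| := by
  rw [Gamma_mul_Gamma_one_sub] at h ⊢
  have hsin : 0 < |sin (π * x)| := abs_pos.2 fun h0 => h (by rw [h0, div_zero])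
  rw [abs_div, abs_of_pos pi_pos, le_div_iff₀ hsin]
  exact mul_le_of_le_one_right pi_pos.le (abs_sin_le_one _)

end Real

theorem exists_pos_eventually_mul_pow_le_pow {x : ℕ → ℝ} (hx : Tendsto x atTop atTop)
    {k : ℕ → ℕ} {c d : ℝ} (hc : 0 < c) (hk : ∀ n : ℕ, c * n - d ≤ k n) {C : ℝ} (hC : 0 ≤ C) :
    ∃ K > 0, ∀ᶠ n in atTop, K * C ^ n ≤ x n ^ k n := by
  set B := max 1 (C ^ c⁻¹)
  have hB : 1 ≤ B := le_max_left _ _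
  have hB0 : 0 < B := one_pos.trans_le hB
  have hBc : C ≤ B ^ c := by
    calc C = (C ^ c⁻¹) ^ c := by rw [← rpow_mul hC, inv_mul_cancel₀ hc.ne', rpow_one]
      _ ≤ B ^ c := by gcongr; exact le_max_right _ _
  refine ⟨B ^ (-d), rpow_pos_of_pos hB0 _, ?_⟩
  filter_upwards [hx.eventually_ge_atTop B] with n hn
  calc B ^ (-d) * C ^ n ≤ B ^ (-d) * (B ^ c) ^ n := by gcongr
    _ = B ^ (c * n - d) := by
      rw [← rpow_mul_natCast hB0.le, sub_eq_neg_add, rpow_add hB0]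
    _ ≤ B ^ (k n : ℝ) := rpow_le_rpow_of_exponent_le hB (hk n)
    _ ≤ x n ^ k n := by rw [rpow_natCast]; gcongr

theorem exists_pos_eventually_mul_pow_mul_Gamma_le_Gamma {x y : ℕ → ℝ}
    (hx : Tendsto x atTop atTop) {c d : ℝ} (hc : 0 < c) (hxy : ∀ n : ℕ, c * n - d ≤ y n - x n)
    {C : ℝ} (hC : 0 ≤ C) :
    ∃ K > 0, ∀ᶠ n in atTop, K * C ^ n * Gamma (x n) ≤ Gamma (y n) := by
  obtain ⟨K, hK, hev⟩ := exists_pos_eventually_mul_pow_le_pow hx (k := fun n => ⌊y n - x n⌋₊)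
    hc (d := d + 1) (fun n => by linarith [hxy n, Nat.sub_one_lt_floor (y n - x n)]) hC
  have hlin : Tendsto (fun n : ℕ => c * n - d) atTop atTop :=
    tendsto_atTop_add_const_right _ _ (tendsto_natCast_atTop_atTop.const_mul_atTop hc)
  refine ⟨K, hK, ?_⟩
  filter_upwards [hev, hx.eventually_ge_atTop 2, hlin.eventually_ge_atTop 0] with n hpow hx2 hdiff
  calc K * C ^ n * Gamma (x n) ≤ x n ^ ⌊y n - x n⌋₊ * Gamma (x n) := by
        gcongr
    _ ≤ Gamma (y n) := by
      rw [mul_comm]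
      exact Gamma_mul_pow_le_Gamma hx2 (by linarith [Nat.floor_le (hdiff.trans (hxy n))])

theorem summable_pow_div_abs_of_eventually_mul_pow_le {r K : ℝ} (hr : 0 ≤ r) (hK : 0 < K)
    {D : ℕ → ℝ} (hD : ∀ᶠ n in atTop, D n ≠ 0 → K * (r + 1) ^ n ≤ |D n|) :
    Summable fun n => r ^ n / |D n| := by
  have hq : r / (r + 1) < 1 := (div_lt_one (by positivity)).2 (by linarith)
  refine Summable.of_norm_bounded_eventually_nat
    ((summable_geometric_of_lt_one (by positivity) hq).mul_left K⁻¹) ?_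
  filter_upwards [hD] with n hn
  rw [Real.norm_of_nonneg (by positivity)]
  rcases eq_or_ne (D n) 0 with h0 | h0
  · rw [h0, abs_zero, div_zero]; positivity
  · calc r ^ n / |D n| ≤ r ^ n / (K * (r + 1) ^ n) := by gcongr; exact hn h0
      _ = K⁻¹ * (r / (r + 1)) ^ n := by rw [div_pow]; field_simp

theorem exists_pos_eventually_le_Gamma_add_mul {α β : ℝ} (hα : 0 < α) (hβ : 0 ≤ β) :
    ∃ m > 0, ∀ᶠ n : ℕ in atTop, m ≤ Gamma (α + n * β) := by
  rcases hβ.eq_or_lt with rfl | hβ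
  · exact ⟨Gamma α, Gamma_pos_of_pos hα, .of_forall fun n => by simp⟩
  · have hlin : Tendsto (fun n : ℕ => α + n * β) atTop atTop :=
      tendsto_atTop_add_const_left _ _ (tendsto_natCast_atTop_atTop.atTop_mul_const hβ)
    exact ⟨1, one_pos, (hlin.eventually_ge_atTop 2).mono fun n => one_le_Gamma⟩

theorem exists_pos_eventually_mul_pow_le_Gamma_mul_Gamma_of_nonneg {α β γ δ C : ℝ}
    (hα : 0 < α) (hβ : 0 ≤ β) (hδ : 0 < δ) (hC : 0 ≤ C) :
    ∃ K > 0, ∀ᶠ n : ℕ in atTop, K * C ^ n ≤ Gamma (α + n * β) * Gamma (γ + n * δ) := by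
  obtain ⟨m, hm, hmev⟩ := exists_pos_eventually_le_Gamma_add_mul hα hβ
  have hx : Tendsto (fun n : ℕ => (γ + n * δ) / 2) atTop atTop :=
    (tendsto_atTop_add_const_left _ _
      (tendsto_natCast_atTop_atTop.atTop_mul_const hδ)).atTop_div_const two_pos
  obtain ⟨K, hK, hev⟩ := exists_pos_eventually_mul_pow_mul_Gamma_le_Gamma hx (half_pos hδ)
    (y := fun n => γ + n * δ) (d := -(γ / 2)) (fun n => by linarith) hC
  refine ⟨m * K, mul_pos hm hK, ?_⟩
  filter_upwards [hmev, hev, hx.eventually_ge_atTop 2] with n hma hGamma hx2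
  calc m * K * C ^ n = m * (K * C ^ n * 1) := by ring
    _ ≤ Gamma (α + n * β) * (K * C ^ n * Gamma ((γ + n * δ) / 2)) := by
        gcongr
        exact one_le_Gamma hx2
    _ ≤ Gamma (α + n * β) * Gamma (γ + n * δ) := by gcongr

theorem exists_pos_eventually_mul_pow_le_abs_Gamma_mul_Gamma_of_neg {α β γ δ C : ℝ}
    (hβ : β < 0) (hβδ : 0 < β + δ) (hC : 0 ≤ C) :
    ∃ K > 0, ∀ᶠ n : ℕ in atTop, Gamma (α + n * β) * Gamma (γ + n * δ) ≠ 0 →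
      K * C ^ n ≤ |Gamma (α + n * β) * Gamma (γ + n * δ)| := by
  have hx : Tendsto (fun n : ℕ => 1 - (α + n * β)) atTop atTop := by
    refine (tendsto_atTop_add_const_left _ (1 - α)
      (tendsto_natCast_atTop_atTop.atTop_mul_const (neg_pos.2 hβ))).congr fun n => ?_
    ring
  obtain ⟨K, hK, hev⟩ := exists_pos_eventually_mul_pow_mul_Gamma_le_Gamma hx hβδ
    (y := fun n => γ + n * δ) (d := 1 - α - γ) (fun n => by linarith) hC
  refine ⟨π * K, mul_pos pi_pos hK, ?_⟩
  filter_upwards [hev, hx.eventually_gt_atTop 0] with n hGamma hx0 hne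
  set a := α + n * β
  have hΓx := Gamma_pos_of_pos hx0
  have hΓy : 0 ≤ Gamma (γ + n * δ) := le_trans (by positivity) hGamma
  have hrefl := pi_le_abs_Gamma_mul_Gamma_one_sub
    (mul_ne_zero (left_ne_zero_of_mul hne) hΓx.ne')
  calc π * K * C ^ n ≤ |Gamma a * Gamma (1 - a)| * (K * C ^ n) := by
        rw [mul_assoc]; gcongr
    _ = |Gamma a| * (K * C ^ n * Gamma (1 - a)) := by
        rw [abs_mul, abs_of_pos hΓx]; ring
    _ ≤ |Gamma a * Gamma (γ + n * δ)| := by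
        rw [abs_mul, abs_of_nonneg hΓy]; gcongr

theorem exists_pos_eventually_mul_pow_le_abs_Gamma_mul_Gamma {α β γ δ C : ℝ}
    (hα : 0 < α) (hγ : 0 < γ) (hβδ : 0 < β + δ) (hC : 0 ≤ C) :
    ∃ K > 0, ∀ᶠ n : ℕ in atTop, Gamma (α + n * β) * Gamma (γ + n * δ) ≠ 0 →
      K * C ^ n ≤ |Gamma (α + n * β) * Gamma (γ + n * δ)| := by
  wlog hle : β ≤ δ generalizing α β γ δ
  · simpa only [mul_comm (Gamma (γ + _))] using
      this hγ hα (by linarith) (le_of_not_ge hle)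
  rcases lt_or_ge β 0 with hβ | hβ
  · exact exists_pos_eventually_mul_pow_le_abs_Gamma_mul_Gamma_of_neg hβ hβδ hC
  · obtain ⟨K, hK, hev⟩ :=
      exists_pos_eventually_mul_pow_le_Gamma_mul_Gamma_of_nonneg hα hβ (by linarith) hC
    exact ⟨K, hK, hev.mono fun n hn _ => hn.trans (le_abs_self _)⟩

/-- For real β, δ with β + δ > 0 and α, γ > 0, the series
∑ zⁿ / (Γ(α + nβ) Γ(γ + nδ)) converges absolutely for every complex z. -/
theorem wright_series_abs_convergent (α β γ δ : ℝ)
    (hα : 0 < α) (hγ : 0 < γ) (hβδ : 0 < β + δ) (z : ℂ) :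
    Summable (fun n : ℕ =>
      ‖z ^ n / ((Real.Gamma (α + n * β) * Real.Gamma (γ + n * δ) : ℝ) : ℂ)‖) := by
  obtain ⟨K, hK, hev⟩ := exists_pos_eventually_mul_pow_le_abs_Gamma_mul_Gamma hα hγ hβδ
    (C := ‖z‖ + 1) (by positivity)
  simpa only [norm_div, norm_pow, Complex.norm_real, Real.norm_eq_abs] using
    summable_pow_div_abs_of_eventually_mul_pow_le (norm_nonneg z) hK hev
end

section
/- Let f = h + conj(g) with h(z) = z + ∑_{n≥2} a_n z^n and g(z) = ∑_{n≥1} b_n z^n analytic on the unit disk and |b_1| < 1. If for some 0 ≤ α < 1 one has ∑_{n≥2} (n−α)|a_n| + ∑_{n≥1} (n+α)|b_n| ≤ 1 − α, then f is sense-preserving (|h'(z)| > |g'(z)| for all z in the unit disk) and univalent on the unit disk. -/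
/-!
Write `A = ∑ n |aₙ|` and `B = ∑ n |bₙ|`. Since `n - α ≥ (1 - α) n` for `n ≥ 1` and
`n + α ≥ (1 - α) n`, the coefficient condition gives `A + B ≤ 1`. On `|z| ≤ r < 1` the
derivatives of `h(z) - z` and `g` are bounded by `Mₐ(r) = ∑ n |aₙ| r^(n-1)` and `M_b(r)`, and
because `a₁ = 0` and `|b₁| < 1`, `Mₐ(r) + M_b(r) ≤ r (A + B) + (1 - r) |b₁| < 1`.
Hence `|g'| ≤ M_b < 1 - Mₐ ≤ |h'|`, and by the mean value inequality on the disk of radius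
`max |z| |w|`, `f z = f w` forces `|z - w| ≤ (Mₐ + M_b) |z - w|`, i.e. `z = w`.
-/

open Metric

lemma summable_and_mul_tsum_le_of_mul_le {u v : ℕ → ℝ} {k : ℝ} (hk : 0 < k)
    (hu : ∀ n, 0 ≤ u n) (huv : ∀ n, k * u n ≤ v n) (hv : Summable v) :
    Summable u ∧ k * ∑' n, u n ≤ ∑' n, v n := by
  have hku : Summable fun n => k * u n :=
    hv.of_nonneg_of_le (fun n => mul_nonneg hk.le (hu n)) huv
  refine ⟨(summable_mul_left_iff hk.ne').1 hku, ?_⟩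
  rw [← tsum_mul_left]
  exact hku.tsum_le_tsum huv hv

lemma summable_natCast_mul_norm_of_coeff_le {E : Type*} [SeminormedAddGroup E] {a b : ℕ → E}
    {α : ℝ} (hα0 : 0 ≤ α) (hα1 : α < 1) (ha0 : a 0 = 0)
    (hsa : Summable fun n : ℕ => ((n : ℝ) - α) * ‖a n‖)
    (hsb : Summable fun n : ℕ => ((n : ℝ) + α) * ‖b n‖)
    (hcoef : (∑' n : ℕ, ((n : ℝ) - α) * ‖a n‖) + ∑' n : ℕ, ((n : ℝ) + α) * ‖b n‖ ≤ 1 - α) :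
    (Summable fun n : ℕ => n * ‖a n‖) ∧ (Summable fun n : ℕ => n * ‖b n‖) ∧
      ∑' n : ℕ, n * ‖a n‖ + ∑' n : ℕ, n * ‖b n‖ ≤ 1 := by
  have hk : 0 < 1 - α := sub_pos.2 hα1
  have hwa (n : ℕ) : (1 - α) * (n * ‖a n‖) ≤ (n - α) * ‖a n‖ := by
    rcases n with _ | n
    · simp [ha0]
    · push_cast
      nlinarith [mul_nonneg (mul_nonneg hα0 n.cast_nonneg) (norm_nonneg (a (n + 1)))]
  have hwb (n : ℕ) : (1 - α) * (n * ‖b n‖) ≤ (n + α) * ‖b n‖ := by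
    nlinarith [mul_nonneg (mul_nonneg hα0 n.cast_nonneg) (norm_nonneg (b n)),
      mul_nonneg hα0 (norm_nonneg (b n))]
  obtain ⟨ha, hSa⟩ :=
    summable_and_mul_tsum_le_of_mul_le hk (fun n => by positivity) hwa hsa
  obtain ⟨hb, hSb⟩ :=
    summable_and_mul_tsum_le_of_mul_le hk (fun n => by positivity) hwb hsb
  exact ⟨ha, hb, le_of_mul_le_mul_left (by linarith) hk⟩

section PowerSeries

variable {𝕜 : Type*} [RCLike 𝕜] {c : ℕ → 𝕜}

noncomputable def derivMajorant (c : ℕ → 𝕜) (r : ℝ) : ℝ :=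
  ∑' n : ℕ, n * ‖c n‖ * r ^ (n - 1)

lemma summable_derivMajorant (hc : Summable fun n : ℕ => n * ‖c n‖) {r : ℝ} (hr0 : 0 ≤ r)
    (hr1 : r ≤ 1) : Summable fun n : ℕ => n * ‖c n‖ * r ^ (n - 1) :=
  hc.of_nonneg_of_le (fun n => by positivity)
    fun n => mul_le_of_le_one_right (by positivity) (pow_le_one₀ hr0 hr1)

lemma norm_mul_natCast_mul_pow_le {z : 𝕜} {r : ℝ} (hz : ‖z‖ ≤ r) (n : ℕ) :
    ‖c n * (n * z ^ (n - 1))‖ ≤ n * ‖c n‖ * r ^ (n - 1) := by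
  rw [norm_mul, norm_mul, norm_pow, RCLike.norm_natCast, mul_left_comm, ← mul_assoc]
  gcongr

lemma hasDerivAt_tsum_mul_pow (hc : Summable fun n : ℕ => n * ‖c n‖) {z : 𝕜}
    (hz : z ∈ ball (0 : 𝕜) 1) :
    HasDerivAt (fun y => ∑' n, c n * y ^ n) (∑' n, c n * (n * z ^ (n - 1))) z := by
  refine hasDerivAt_tsum_of_isPreconnected hc isOpen_ball (convex_ball 0 1).isPreconnected
    (fun n y _ => (hasDerivAt_pow n y).const_mul (c n)) (fun n y hy => ?_)
    (mem_ball_self one_pos) ?_ hz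
  · simpa using norm_mul_natCast_mul_pow_le (c := c) (mem_ball_zero_iff.1 hy).le n
  · refine summable_of_ne_finset_zero (s := {0}) fun n hn => ?_
    simp [zero_pow (Finset.notMem_singleton.1 hn)]

lemma norm_tsum_mul_natCast_mul_pow_le (hc : Summable fun n : ℕ => n * ‖c n‖) {z : 𝕜}
    {r : ℝ} (hz : ‖z‖ ≤ r) (hr1 : r ≤ 1) :
    ‖∑' n, c n * (n * z ^ (n - 1))‖ ≤ derivMajorant c r :=
  tsum_of_norm_bounded (summable_derivMajorant hc ((norm_nonneg z).trans hz) hr1).hasSum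
    (norm_mul_natCast_mul_pow_le hz)

lemma norm_tsum_mul_pow_sub_le (hc : Summable fun n : ℕ => n * ‖c n‖) {z w : 𝕜} {r : ℝ}
    (hz : ‖z‖ ≤ r) (hw : ‖w‖ ≤ r) (hr1 : r < 1) :
    ‖∑' n, c n * z ^ n - ∑' n, c n * w ^ n‖ ≤ derivMajorant c r * ‖z - w‖ := by
  have hsub : closedBall (0 : 𝕜) r ⊆ ball 0 1 := closedBall_subset_ball hr1
  refine (convex_closedBall 0 r).norm_image_sub_le_of_norm_hasDerivWithin_le
    (fun x hx => (hasDerivAt_tsum_mul_pow hc (hsub hx)).hasDerivWithinAt)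
    (fun x hx => norm_tsum_mul_natCast_mul_pow_le hc (mem_closedBall_zero_iff.1 hx) hr1.le)
    ?_ ?_ <;> simpa

lemma derivMajorant_le (hc : Summable fun n : ℕ => n * ‖c n‖) {r : ℝ} (hr0 : 0 ≤ r)
    (hr1 : r ≤ 1) : derivMajorant c r ≤ r * ∑' n : ℕ, n * ‖c n‖ + (1 - r) * ‖c 1‖ := by
  refine hasSum_le (fun n => ?_) (summable_derivMajorant hc hr0 hr1).hasSum
    ((hc.hasSum.mul_left r).add (hasSum_ite_eq 1 ((1 - r) * ‖c 1‖)))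
  rcases n with _ | _ | n
  · simp
  · simp only [zero_add, Nat.cast_one, one_mul, tsub_self, pow_zero, mul_one, if_pos]
    linarith
  · rw [if_neg (by omega), add_zero, mul_comm r]
    gcongr
    exact pow_le_of_le_one hr0 hr1 (by omega)

lemma derivMajorant_add_lt_one {a b : ℕ → 𝕜} (ha : Summable fun n : ℕ => n * ‖a n‖)
    (hb : Summable fun n : ℕ => n * ‖b n‖)
    (hab : ∑' n : ℕ, n * ‖a n‖ + ∑' n : ℕ, n * ‖b n‖ ≤ 1) (ha1 : a 1 = 0) (hb1 : ‖b 1‖ < 1)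
    {r : ℝ} (hr0 : 0 ≤ r) (hr1 : r < 1) : derivMajorant a r + derivMajorant b r < 1 := by
  have hMa := derivMajorant_le ha hr0 hr1.le
  have hMb := derivMajorant_le hb hr0 hr1.le
  rw [ha1, norm_zero, mul_zero, add_zero] at hMa
  nlinarith [mul_nonneg hr0 (sub_nonneg.2 hab), mul_pos (sub_pos.2 hr1) (sub_pos.2 hb1)]

lemma norm_deriv_tsum_lt_norm_deriv_add_tsum {a b : ℕ → 𝕜}
    (ha : Summable fun n : ℕ => n * ‖a n‖) (hb : Summable fun n : ℕ => n * ‖b n‖) {z : 𝕜}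
    (hz : z ∈ ball (0 : 𝕜) 1) (hM : derivMajorant a ‖z‖ + derivMajorant b ‖z‖ < 1) :
    ‖deriv (fun y => ∑' n, b n * y ^ n) z‖ < ‖deriv (fun y => y + ∑' n, a n * y ^ n) z‖ := by
  have hz1 := (mem_ball_zero_iff.1 hz).le
  rw [(hasDerivAt_tsum_mul_pow hb hz).deriv,
    ((hasDerivAt_id' z).fun_add (hasDerivAt_tsum_mul_pow ha hz)).deriv]
  have hA := norm_tsum_mul_natCast_mul_pow_le ha le_rfl hz1
  have hB := norm_tsum_mul_natCast_mul_pow_le hb le_rfl hz1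
  have h1A := norm_sub_norm_le (1 : 𝕜) (-∑' n, a n * (n * z ^ (n - 1)))
  rw [norm_one, norm_neg, sub_neg_eq_add] at h1A
  linarith

end PowerSeries

lemma injOn_add_tsum_add_conj_tsum {a b : ℕ → ℂ} (ha : Summable fun n : ℕ => n * ‖a n‖)
    (hb : Summable fun n : ℕ => n * ‖b n‖)
    (hM : ∀ r : ℝ, 0 ≤ r → r < 1 → derivMajorant a r + derivMajorant b r < 1) :
    Set.InjOn (fun z => z + ∑' n, a n * z ^ n + starRingEnd ℂ (∑' n, b n * z ^ n))
      (ball (0 : ℂ) 1) := by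
  intro z hz w hw hzw
  by_contra hne
  set r := max ‖z‖ ‖w‖
  have hr1 : r < 1 := max_lt (mem_ball_zero_iff.1 hz) (mem_ball_zero_iff.1 hw)
  have hA := norm_tsum_mul_pow_sub_le ha (le_max_left _ _) (le_max_right _ _) hr1
  have hB := norm_tsum_mul_pow_sub_le hb (le_max_left _ _) (le_max_right _ _) hr1
  have hzw' : z - w = -(∑' n, a n * z ^ n - ∑' n, a n * w ^ n)
      - starRingEnd ℂ (∑' n, b n * z ^ n - ∑' n, b n * w ^ n) := by
    rw [map_sub]
    linear_combination hzw
  have hle : ‖z - w‖ ≤ (derivMajorant a r + derivMajorant b r) * ‖z - w‖ := by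
    rw [add_mul]
    refine le_trans ?_ (add_le_add hA hB)
    rw [hzw']
    exact (norm_sub_le _ _).trans_eq (by rw [norm_neg, RCLike.norm_conj])
  exact (mul_lt_of_lt_one_left (norm_pos_iff.2 (sub_ne_zero.2 hne))
    (hM r (le_max_of_le_left (norm_nonneg z)) hr1)).not_ge hle

theorem harmonic_starlike_coefficient_criterion_general
    (a b : ℕ → ℂ) (α : ℝ) (hα0 : 0 ≤ α) (hα1 : α < 1)
    (ha0 : a 0 = 0) (ha1 : a 1 = 0) (hb1 : ‖b 1‖ < 1)
    (h g : ℂ → ℂ)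
    (hh : ∀ z ∈ ball (0 : ℂ) 1, h z = z + ∑' n : ℕ, a n * z ^ n)
    (hg : ∀ z ∈ ball (0 : ℂ) 1, g z = ∑' n : ℕ, b n * z ^ n)
    (hsa : Summable (fun n : ℕ => ((n : ℝ) - α) * ‖a n‖))
    (hsb : Summable (fun n : ℕ => ((n : ℝ) + α) * ‖b n‖))
    (hcoef : (∑' n : ℕ, ((n : ℝ) - α) * ‖a n‖) + ∑' n : ℕ, ((n : ℝ) + α) * ‖b n‖
      ≤ 1 - α) :
    (∀ z ∈ ball (0 : ℂ) 1, ‖deriv g z‖ < ‖deriv h z‖) ∧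
      Set.InjOn (fun z => h z + (starRingEnd ℂ) (g z)) (ball (0 : ℂ) 1) := by
  obtain ⟨ha, hb, hab⟩ := summable_natCast_mul_norm_of_coeff_le hα0 hα1 ha0 hsa hsb hcoef
  have hM (r : ℝ) (hr0 : 0 ≤ r) (hr1 : r < 1) :=
    derivMajorant_add_lt_one ha hb hab ha1 hb1 hr0 hr1
  refine ⟨fun z hz => ?_, (injOn_add_tsum_add_conj_tsum ha hb hM).congr fun z hz => ?_⟩
  · have hnhds := isOpen_ball.mem_nhds hz
    rw [(Filter.eventuallyEq_of_mem hnhds hh).deriv_eq,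
      (Filter.eventuallyEq_of_mem hnhds hg).deriv_eq]
    exact norm_deriv_tsum_lt_norm_deriv_add_tsum ha hb hz
      (hM ‖z‖ (norm_nonneg z) (mem_ball_zero_iff.1 hz))
  · simp only [hh z hz, hg z hz]

/-- Jahangiri's coefficient criterion. If
∑_{n≥2} (n−α)|aₙ| + ∑_{n≥1} (n+α)|bₙ| ≤ 1 − α for some 0 ≤ α < 1, then
f = h + conj g is sense-preserving and univalent on the unit disk. -/
theorem harmonic_starlike_coefficient_criterion
    (a b : ℕ → ℂ) (α : ℝ) (hα0 : 0 ≤ α) (hα1 : α < 1)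
    (ha0 : a 0 = 0) (ha1 : a 1 = 0) (hb0 : b 0 = 0) (hb1 : ‖b 1‖ < 1)
    (h g : ℂ → ℂ)
    (hh : ∀ z ∈ ball (0 : ℂ) 1, h z = z + ∑' n : ℕ, a n * z ^ n)
    (hg : ∀ z ∈ ball (0 : ℂ) 1, g z = ∑' n : ℕ, b n * z ^ n)
    (hsa : Summable (fun n : ℕ => ((n : ℝ) - α) * ‖a n‖))
    (hsb : Summable (fun n : ℕ => ((n : ℝ) + α) * ‖b n‖))
    (hcoef : (∑' n : ℕ, ((n : ℝ) - α) * ‖a n‖) + ∑' n : ℕ, ((n : ℝ) + α) * ‖b n‖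
      ≤ 1 - α) :
    (∀ z ∈ ball (0 : ℂ) 1, ‖deriv g z‖ < ‖deriv h z‖) ∧
      Set.InjOn (fun z => h z + (starRingEnd ℂ) (g z)) (ball (0 : ℂ) 1) :=
  harmonic_starlike_coefficient_criterion_general a b α hα0 hα1 ha0 ha1 hb1 h g hh hg hsa hsb hcoef
end

section
/- Let β₁, β₂, δ₁, δ₂ ≥ 0 with β₁+δ₁ > 0 and β₂+δ₂ > 0, α₁, α₂, γ₁, γ₂ > 0, |σ| < 1, 0 ≤ α < 1, and suppose |A_n| ≤ 1 and |B_n| ≤ 1 for all n. If (W'_{(α₁,β₁),(γ₁,δ₁)}(1) − 1) − α(W_{(α₁,β₁),(γ₁,δ₁)}(1) − 1) + |σ|(W'_{(α₂,β₂),(γ₂,δ₂)}(1) + α W_{(α₂,β₂),(γ₂,δ₂)}(1)) ≤ 1 − α, then ∑_{n=2}^∞ (n−α) |Γ(α₁)Γ(γ₁)/(Γ(α₁+(n−1)β₁)Γ(γ₁+(n−1)δ₁))| |A_n| + |σ| ∑_{n=1}^∞ (n+α) |Γ(α₂)Γ(γ₂)/(Γ(α₂+(n−1)β₂)Γ(γ₂+(n−1)δ₂))|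 |B_n| ≤ 1 − α. -/
/-!
Write `W(x) = ∑ₙ cₙ xⁿ⁺¹` with `cₙ = Γ(a)Γ(c) / (Γ(a + nb) Γ(c + nd))`, so that `c₀ = 1`.
Log-convexity of `Γ` gives `Γ(x + b) ≥ (x - 1)ᵇ Γ(x)`, hence `cₙ₊₁ / cₙ → 0` as soon as `b + d > 0`;
the series is then entire, and `W(1) = ∑ cₙ`, `W'(1) = ∑ (n + 1) cₙ`. As the `cₙ` are positive and
`‖Aₙ‖, ‖Bₙ‖ ≤ 1`, the two sums of the estimate are bounded by `∑ (n + 1 - α) cₙ - (1 - α)` and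
`∑ (n + 1 + α) cₙ`, i.e. by `W₁'(1) - αW₁(1) - (1 - α)` and `W₂'(1) + αW₂(1)`, which is the
combination the hypothesis bounds.
-/

/-- The normalized four-parameter Wright function
`W_{(a,b),(c,d)}(x) = x + ∑_{n=2}^∞ Γ(a)Γ(c) xⁿ / (Γ(a+(n-1)b)Γ(c+(n-1)d))`
(as a function of a real variable, evaluated along the real axis). -/
noncomputable def wrightW (a b c d : ℝ) : ℝ → ℝ := fun x =>
  x + ∑' n : ℕ, Real.Gamma a * Real.Gamma c /
    (Real.Gamma (a + ((n : ℝ) + 1) * b) * Real.Gamma (c + ((n : ℝ) + 1) * d)) * x ^ (n + 2)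

open Real Filter Topology

theorem rpow_mul_Gamma_le_Gamma_add {x b : ℝ} (hx : 1 < x) (hb : 0 ≤ b) :
    (x - 1) ^ b * Gamma x ≤ Gamma (x + b) := by
  rcases hb.eq_or_lt with rfl | hb
  · simp
  have hx₀ : 0 < x - 1 := by linarith
  have hΓ : 0 < Gamma x := Gamma_pos_of_pos (by linarith)
  have hslope := convexOn_log_Gamma.slope_mono_adjacent (x := x - 1) (y := x) (z := x + b)
    (by simpa using hx₀) (by simp; linarith) (by linarith) (by linarith)
  have hrec : Gamma x = (x - 1) * Gamma (x - 1) := by simpa using Gamma_add_one hx₀.ne'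
  have hlog : log (Gamma x) - log (Gamma (x - 1)) = log (x - 1) := by
    rw [hrec, log_mul hx₀.ne' (Gamma_pos_of_pos hx₀).ne']; ring
  simp only [Function.comp, sub_sub_cancel, div_one, add_sub_cancel_left, hlog] at hslope
  rw [← log_le_log_iff (by positivity) (Gamma_pos_of_pos (by linarith)),
    log_mul (by positivity) hΓ.ne', log_rpow hx₀]
  linarith [(le_div_iff₀' hb).1 hslope]

theorem tendsto_Gamma_div_Gamma_add_atTop {b : ℝ} (hb : 0 < b) :
    Tendsto (fun x => Gamma x / Gamma (x + b)) atTop (𝓝 0) := by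
  have hlim : Tendsto (fun x : ℝ => (x - 1) ^ (-b)) atTop (𝓝 0) :=
    (tendsto_rpow_neg_atTop hb).comp (tendsto_atTop_add_const_right _ (-1) tendsto_id)
  refine tendsto_of_tendsto_of_tendsto_of_le_of_le' tendsto_const_nhds hlim ?_ ?_
  · filter_upwards [eventually_gt_atTop 0] with x hx
    exact div_nonneg (Gamma_pos_of_pos hx).le (Gamma_pos_of_pos (by linarith)).le
  · filter_upwards [eventually_gt_atTop 1] with x hx
    have hx₀ : 0 < x - 1 := by linarith
    rw [div_le_iff₀ (Gamma_pos_of_pos (by linarith)), rpow_neg hx₀.le, inv_mul_eq_div,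
      le_div_iff₀' (by positivity)]
    exact rpow_mul_Gamma_le_Gamma_add hx hb.le

theorem tendsto_Gamma_div_Gamma_add_nat {a b : ℝ} (ha : 0 < a) (hb : 0 ≤ b) :
    Tendsto (fun n : ℕ => Gamma (a + n * b) / Gamma (a + n * b + b)) atTop
      (𝓝 (if b = 0 then 1 else 0)) := by
  rcases hb.eq_or_lt with rfl | hb
  · simp [(Gamma_pos_of_pos ha).ne']
  rw [if_neg hb.ne']
  refine (tendsto_Gamma_div_Gamma_add_atTop hb).comp ?_
  exact tendsto_atTop_add_const_left _ a
    (tendsto_natCast_atTop_atTop.atTop_mul_const hb)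

theorem summable_mul_pow_of_tendsto_succ_div {c : ℕ → ℝ} (hc : ∀ n, 0 < c n)
    (h : Tendsto (fun n => c (n + 1) / c n) atTop (𝓝 0)) (R : ℝ) :
    Summable fun n => c n * R ^ n := by
  refine summable_of_ratio_norm_eventually_le (r := 1 / 2) (by norm_num) ?_
  filter_upwards [h.eventually_le_const (show (0 : ℝ) < 1 / (2 * (|R| + 1)) by positivity)]
    with n hn
  rw [div_le_iff₀ (hc n)] at hn
  have hR : |R| / (2 * (|R| + 1)) ≤ 1 / 2 := by
    rw [div_le_iff₀ (by positivity)]; linarith [abs_nonneg R]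
  simp only [norm_mul, norm_pow, Real.norm_eq_abs, abs_of_pos (hc _), pow_succ]
  calc c (n + 1) * (|R| ^ n * |R|) ≤ 1 / (2 * (|R| + 1)) * c n * (|R| ^ n * |R|) := by gcongr
    _ = |R| / (2 * (|R| + 1)) * (c n * |R| ^ n) := by ring
    _ ≤ 1 / 2 * (c n * |R| ^ n) := by have := (hc n).le; gcongr

theorem summable_succ_mul_mul_pow_of_tendsto_succ_div {c : ℕ → ℝ} (hc : ∀ n, 0 < c n)
    (h : Tendsto (fun n => c (n + 1) / c n) atTop (𝓝 0)) (R : ℝ) :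
    Summable fun n : ℕ => ((n : ℝ) + 1) * c n * R ^ n := by
  refine (summable_mul_pow_of_tendsto_succ_div hc h (2 * |R|)).of_norm_bounded fun n => ?_
  have h2 : (n : ℝ) + 1 ≤ 2 ^ n := by exact_mod_cast Nat.lt_two_pow_self
  have := (hc n).le
  rw [norm_mul, norm_mul, norm_pow, Real.norm_eq_abs, Real.norm_eq_abs, abs_of_pos (hc n), mul_pow,
    abs_of_nonneg (by positivity : (0 : ℝ) ≤ n + 1)]
  calc ((n : ℝ) + 1) * c n * |R| ^ n ≤ 2 ^ n * c n * |R| ^ n := by gcongr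
    _ = c n * (2 ^ n * |R| ^ n) := by ring

theorem hasDerivAt_tsum_mul_pow_succ {c : ℕ → ℝ} {R x : ℝ}
    (hc : Summable fun n : ℕ => ((n : ℝ) + 1) * |c n| * R ^ n) (hx : |x| < R) :
    HasDerivAt (fun y => ∑' n, c n * y ^ (n + 1)) (∑' n : ℕ, ((n : ℝ) + 1) * c n * x ^ n) x := by
  rw [abs_lt] at hx
  refine hasDerivAt_tsum_of_isPreconnected (g := fun n (y : ℝ) => c n * y ^ (n + 1))
    (g' := fun n y => ((n : ℝ) + 1) * c n * y ^ n) hc isOpen_Ioo isPreconnected_Ioo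
    (fun n y _ => ?_) (fun n y hy => ?_) (y₀ := 0) (by simp; linarith) ?_ hx
  · refine ((hasDerivAt_pow (n + 1) y).const_mul (c n)).congr_deriv ?_
    push_cast; ring
  · rw [norm_mul, norm_mul, norm_pow, Real.norm_eq_abs, Real.norm_eq_abs, Real.norm_eq_abs,
      abs_of_nonneg (by positivity : (0 : ℝ) ≤ n + 1)]
    have : |y| ≤ R := abs_le.2 ⟨hy.1.le, hy.2.le⟩
    gcongr
  · simp

theorem tsum_mul_norm_le_tsum {ι E : Type*} [SeminormedAddCommGroup E] {u : ι → ℝ}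
    (hu : Summable u) (hu₀ : ∀ i, 0 ≤ u i) {A : ι → E} (hA : ∀ i, ‖A i‖ ≤ 1) :
    ∑' i, u i * ‖A i‖ ≤ ∑' i, u i := by
  have hle : ∀ i, u i * ‖A i‖ ≤ u i := fun i => mul_le_of_le_one_right (hu₀ i) (hA i)
  exact (hu.of_nonneg_of_le (fun i => mul_nonneg (hu₀ i) (norm_nonneg _)) hle).tsum_le_tsum hle hu

noncomputable def wrightCoeff (a b c d : ℝ) (n : ℕ) : ℝ :=
  Gamma a * Gamma c / (Gamma (a + n * b) * Gamma (c + n * d))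

section Wright

variable {a b c d : ℝ}

theorem wrightCoeff_zero (ha : 0 < a) (hc : 0 < c) : wrightCoeff a b c d 0 = 1 := by
  simp [wrightCoeff, (Gamma_pos_of_pos ha).ne', (Gamma_pos_of_pos hc).ne']

theorem wrightCoeff_pos (ha : 0 < a) (hb : 0 ≤ b) (hc : 0 < c) (hd : 0 ≤ d) (n : ℕ) :
    0 < wrightCoeff a b c d n := by
  unfold wrightCoeff; positivity

theorem wrightCoeff_succ_div (ha : 0 < a) (hb : 0 ≤ b) (hc : 0 < c) (hd : 0 ≤ d) (n : ℕ) :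
    wrightCoeff a b c d (n + 1) / wrightCoeff a b c d n =
      Gamma (a + n * b) / Gamma (a + n * b + b) * (Gamma (c + n * d) / Gamma (c + n * d + d)) := by
  simp only [wrightCoeff, Nat.cast_succ, add_mul, one_mul, ← add_assoc]
  field_simp

theorem tendsto_wrightCoeff_succ_div (ha : 0 < a) (hb : 0 ≤ b) (hc : 0 < c) (hd : 0 ≤ d)
    (hbd : 0 < b + d) :
    Tendsto (fun n => wrightCoeff a b c d (n + 1) / wrightCoeff a b c d n) atTop (𝓝 0) := by
  have hlim : (if b = 0 then (1 : ℝ) else 0) * (if d = 0 then 1 else 0) = 0 := by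
    split_ifs <;> simp_all
  simp_rw [wrightCoeff_succ_div ha hb hc hd]
  exact hlim ▸ (tendsto_Gamma_div_Gamma_add_nat ha hb).mul (tendsto_Gamma_div_Gamma_add_nat hc hd)

theorem summable_wrightCoeff_mul_pow (ha : 0 < a) (hb : 0 ≤ b) (hc : 0 < c) (hd : 0 ≤ d)
    (hbd : 0 < b + d) (R : ℝ) : Summable fun n => wrightCoeff a b c d n * R ^ n :=
  summable_mul_pow_of_tendsto_succ_div (wrightCoeff_pos ha hb hc hd)
    (tendsto_wrightCoeff_succ_div ha hb hc hd hbd) R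

theorem summable_succ_mul_wrightCoeff_mul_pow (ha : 0 < a) (hb : 0 ≤ b) (hc : 0 < c) (hd : 0 ≤ d)
    (hbd : 0 < b + d) (R : ℝ) :
    Summable fun n : ℕ => ((n : ℝ) + 1) * wrightCoeff a b c d n * R ^ n :=
  summable_succ_mul_mul_pow_of_tendsto_succ_div (wrightCoeff_pos ha hb hc hd)
    (tendsto_wrightCoeff_succ_div ha hb hc hd hbd) R

theorem wrightW_eq_tsum (ha : 0 < a) (hb : 0 ≤ b) (hc : 0 < c) (hd : 0 ≤ d) (hbd : 0 < b + d)
    (x : ℝ) : wrightW a b c d x = ∑' n, wrightCoeff a b c d n * x ^ (n + 1) := by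
  have hs : Summable fun n => wrightCoeff a b c d n * x ^ (n + 1) := by
    simpa only [pow_succ, mul_assoc] using
      (summable_wrightCoeff_mul_pow ha hb hc hd hbd x).mul_right x
  rw [hs.tsum_eq_zero_add, wrightCoeff_zero ha hc, zero_add, pow_one, one_mul]
  refine congrArg (x + ·) (tsum_congr fun n => ?_)
  simp only [wrightCoeff, Nat.cast_succ]

theorem hasDerivAt_wrightW (ha : 0 < a) (hb : 0 ≤ b) (hc : 0 < c) (hd : 0 ≤ d) (hbd : 0 < b + d)
    (x : ℝ) :
    HasDerivAt (wrightW a b c d) (∑' n : ℕ, ((n : ℝ) + 1) * wrightCoeff a b c d n * x ^ n) x := by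
  rw [funext (wrightW_eq_tsum ha hb hc hd hbd)]
  refine hasDerivAt_tsum_mul_pow_succ (R := |x| + 1) ?_ (lt_add_one _)
  simpa only [abs_of_pos (wrightCoeff_pos ha hb hc hd _)] using
    summable_succ_mul_wrightCoeff_mul_pow ha hb hc hd hbd (|x| + 1)

theorem hasSum_add_mul_wrightCoeff (ha : 0 < a) (hb : 0 ≤ b) (hc : 0 < c) (hd : 0 ≤ d)
    (hbd : 0 < b + d) (t : ℝ) :
    HasSum (fun n : ℕ => ((n : ℝ) + 1 + t) * wrightCoeff a b c d n)
      (deriv (wrightW a b c d) 1 + t * wrightW a b c d 1) := by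
  rw [(hasDerivAt_wrightW ha hb hc hd hbd 1).deriv, wrightW_eq_tsum ha hb hc hd hbd 1]
  have h₁ := (summable_succ_mul_wrightCoeff_mul_pow ha hb hc hd hbd 1).hasSum
  have h₀ := (summable_wrightCoeff_mul_pow ha hb hc hd hbd 1).hasSum
  simp only [one_pow, mul_one] at h₁ h₀ ⊢
  exact (h₁.add (h₀.mul_left t)).congr_fun fun n => by ring

theorem hasSum_sub_mul_wrightCoeff_succ (ha : 0 < a) (hb : 0 ≤ b) (hc : 0 < c) (hd : 0 ≤ d)
    (hbd : 0 < b + d) (t : ℝ) :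
    HasSum (fun n : ℕ => ((n : ℝ) + 2 - t) * wrightCoeff a b c d (n + 1))
      (deriv (wrightW a b c d) 1 - t * wrightW a b c d 1 - (1 - t)) := by
  have h := (hasSum_nat_add_iff' 1).mpr (hasSum_add_mul_wrightCoeff ha hb hc hd hbd (-t))
  simp only [Finset.range_one, Finset.sum_singleton, wrightCoeff_zero ha hc, Nat.cast_zero] at h
  rw [show deriv (wrightW a b c d) 1 - t * wrightW a b c d 1 - (1 - t) =
    deriv (wrightW a b c d) 1 + -t * wrightW a b c d 1 - (0 + 1 + -t) * 1 by ring]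
  exact h.congr_fun fun n => by push_cast; ring

end Wright

theorem Lf_starlike_coefficient_estimate_general (α₁ β₁ γ₁ δ₁ α₂ β₂ γ₂ δ₂ α : ℝ) (σ : ℂ) (A B : ℕ → ℂ)
    (hβ₁ : 0 ≤ β₁) (hδ₁ : 0 ≤ δ₁) (hβδ₁ : 0 < β₁ + δ₁)
    (hβ₂ : 0 ≤ β₂) (hδ₂ : 0 ≤ δ₂) (hβδ₂ : 0 < β₂ + δ₂)
    (hα₁ : 0 < α₁) (hγ₁ : 0 < γ₁) (hα₂ : 0 < α₂) (hγ₂ : 0 < γ₂)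
    (hα0 : 0 ≤ α) (hα1 : α < 1)
    (hA : ∀ n : ℕ, ‖A n‖ ≤ 1) (hB : ∀ n : ℕ, ‖B n‖ ≤ 1)
    (hyp : (deriv (wrightW α₁ β₁ γ₁ δ₁) 1 - 1) - α * (wrightW α₁ β₁ γ₁ δ₁ 1 - 1)
        + ‖σ‖ * (deriv (wrightW α₂ β₂ γ₂ δ₂) 1 + α * wrightW α₂ β₂ γ₂ δ₂ 1)
        ≤ 1 - α) :
    (∑' n : ℕ, ((n : ℝ) + 2 - α) *
        |Real.Gamma α₁ * Real.Gamma γ₁ /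
          (Real.Gamma (α₁ + ((n : ℝ) + 1) * β₁) * Real.Gamma (γ₁ + ((n : ℝ) + 1) * δ₁))| * ‖A (n + 2)‖)
      + ‖σ‖ * ∑' n : ℕ, ((n : ℝ) + 1 + α) *
        |Real.Gamma α₂ * Real.Gamma γ₂ /
          (Real.Gamma (α₂ + (n : ℝ) * β₂) * Real.Gamma (γ₂ + (n : ℝ) * δ₂))| * ‖B (n + 1)‖
      ≤ 1 - α := by
  have e₁ : ∀ n : ℕ, |Real.Gamma α₁ * Real.Gamma γ₁ /
      (Real.Gamma (α₁ + ((n : ℝ) + 1) * β₁) * Real.Gamma (γ₁ + ((n : ℝ) + 1) * δ₁))| =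
        wrightCoeff α₁ β₁ γ₁ δ₁ (n + 1) := fun n => by
    rw [abs_of_pos (by positivity)]
    simp [wrightCoeff]
  have e₂ : ∀ n : ℕ, |Real.Gamma α₂ * Real.Gamma γ₂ /
      (Real.Gamma (α₂ + (n : ℝ) * β₂) * Real.Gamma (γ₂ + (n : ℝ) * δ₂))| =
        wrightCoeff α₂ β₂ γ₂ δ₂ n := fun n =>
    abs_of_pos (wrightCoeff_pos hα₂ hβ₂ hγ₂ hδ₂ n)
  have h₁ := hasSum_sub_mul_wrightCoeff_succ hα₁ hβ₁ hγ₁ hδ₁ hβδ₁ α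
  have h₂ := hasSum_add_mul_wrightCoeff hα₂ hβ₂ hγ₂ hδ₂ hβδ₂ α
  have hA' : ∑' n : ℕ, ((n : ℝ) + 2 - α) * wrightCoeff α₁ β₁ γ₁ δ₁ (n + 1) * ‖A (n + 2)‖ ≤
      deriv (wrightW α₁ β₁ γ₁ δ₁) 1 - α * wrightW α₁ β₁ γ₁ δ₁ 1 - (1 - α) :=
    h₁.tsum_eq ▸ tsum_mul_norm_le_tsum h₁.summable
      (fun n => mul_nonneg (by linarith [n.cast_nonneg (α := ℝ)])
        (wrightCoeff_pos hα₁ hβ₁ hγ₁ hδ₁ _).le) (fun n => hA (n + 2))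
  have hB' : ∑' n : ℕ, ((n : ℝ) + 1 + α) * wrightCoeff α₂ β₂ γ₂ δ₂ n * ‖B (n + 1)‖ ≤
      deriv (wrightW α₂ β₂ γ₂ δ₂) 1 + α * wrightW α₂ β₂ γ₂ δ₂ 1 :=
    h₂.tsum_eq ▸ tsum_mul_norm_le_tsum h₂.summable
      (fun n => mul_nonneg (by positivity) (wrightCoeff_pos hα₂ hβ₂ hγ₂ hδ₂ _).le)
      (fun n => hB (n + 1))
  simp only [e₁, e₂]
  linarith [mul_le_mul_of_nonneg_left hB' (norm_nonneg σ)]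

/-- key coefficient estimate for harmonic starlikeness of L(f). -/
theorem Lf_starlike_coefficient_estimate (α₁ β₁ γ₁ δ₁ α₂ β₂ γ₂ δ₂ α : ℝ) (σ : ℂ) (A B : ℕ → ℂ)
    (hβ₁ : 0 ≤ β₁) (hδ₁ : 0 ≤ δ₁) (hβδ₁ : 0 < β₁ + δ₁)
    (hβ₂ : 0 ≤ β₂) (hδ₂ : 0 ≤ δ₂) (hβδ₂ : 0 < β₂ + δ₂)
    (hα₁ : 0 < α₁) (hγ₁ : 0 < γ₁) (hα₂ : 0 < α₂) (hγ₂ : 0 < γ₂)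
    (hσ : ‖σ‖ < 1) (hα0 : 0 ≤ α) (hα1 : α < 1)
    (hA : ∀ n : ℕ, ‖A n‖ ≤ 1) (hB : ∀ n : ℕ, ‖B n‖ ≤ 1)
    (hyp : (deriv (wrightW α₁ β₁ γ₁ δ₁) 1 - 1) - α * (wrightW α₁ β₁ γ₁ δ₁ 1 - 1)
        + ‖σ‖ * (deriv (wrightW α₂ β₂ γ₂ δ₂) 1 + α * wrightW α₂ β₂ γ₂ δ₂ 1)
        ≤ 1 - α) :
    (∑' n : ℕ, ((n : ℝ) + 2 - α) *
        |Real.Gamma α₁ * Real.Gamma γ₁ /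
          (Real.Gamma (α₁ + ((n : ℝ) + 1) * β₁) * Real.Gamma (γ₁ + ((n : ℝ) + 1) * δ₁))| * ‖A (n + 2)‖)
      + ‖σ‖ * ∑' n : ℕ, ((n : ℝ) + 1 + α) *
        |Real.Gamma α₂ * Real.Gamma γ₂ /
          (Real.Gamma (α₂ + (n : ℝ) * β₂) * Real.Gamma (γ₂ + (n : ℝ) * δ₂))| * ‖B (n + 1)‖
      ≤ 1 - α :=
  Lf_starlike_coefficient_estimate_general α₁ β₁ γ₁ δ₁ α₂ β₂ γ₂ δ₂ α σ A B hβ₁ hδ₁ hβδ₁ hβ₂ hδ₂ hβδ₂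
    hα₁ hγ₁ hα₂ hγ₂ hα0 hα1 hA hB hyp
end

section
/- Let β₁, β₂, δ₁, δ₂ ≥ 0 with β₁+δ₁ > 0, β₂+δ₂ > 0, and α₁, α₂, γ₁, γ₂ > 0. Suppose |A_n| ≤ 1/n and |B_n| ≤ 1/n for all n ≥ 2, and |B₁| < 1. If W_{(α₁,β₁),(γ₁,δ₁)}(1) + W_{(α₂,β₂),(γ₂,δ₂)}(1) − 2 ≤ 1 − |B₁|, then for every complex ε with |ε| = 1, ∑_{n=2}^∞ n |t_n| ≤ 1, where t_n = Γ(α₁)Γ(γ₁)A_n / (Γ(α₁+(n−1)β₁)Γ(γ₁+(n−1)δ₁)(1+εB₁)) + ε Γ(α₂)Γ(γ₂)B_n / (Γ(α₂+(n−1)β₂)Γ(γ₂+(n−1)δ₂)(1+εB₁)). -/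
open Real

lemma gamma_ge_two_rpow {x : ℝ} (hx : 2 ≤ x) : (2:ℝ) ^ (x - 3) ≤ Real.Gamma x := by
  set m := ⌊x⌋₊ with hm
  have hm2 : 2 ≤ m := Nat.le_floor (by exact_mod_cast hx)
  have hmx : (m : ℝ) ≤ x := Nat.floor_le (by linarith)
  have h1 : Real.Gamma (m : ℝ) ≤ Real.Gamma x := by
    rcases eq_or_lt_of_le hmx with h | h
    · rw [h]
    · exact le_of_lt (Real.Gamma_strictMonoOn_Ici (Set.mem_Ici.mpr (by exact_mod_cast hm2)) (Set.mem_Ici.mpr (le_trans (by exact_mod_cast hm2) hmx)) h)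
  have h2 : ((m - 1).factorial : ℝ) = Real.Gamma (m : ℝ) := by
    have : (m : ℝ) = ((m - 1 : ℕ) : ℝ) + 1 := by
      have : m - 1 + 1 = m := Nat.succ_pred_eq_of_pos (Nat.lt_of_lt_of_le Nat.zero_lt_two hm2)
      exact_mod_cast (congrArg (Nat.cast : ℕ → ℝ) this).symm
    rw [this, Real.Gamma_nat_eq_factorial]
  have h3 : (2:ℝ) ^ (m - 2 : ℕ) ≤ ((m - 1).factorial : ℝ) := by
    have := @Nat.factorial_mul_pow_le_factorial 1 (m - 2)
    have h' : 2 ^ (m - 2) ≤ (m - 1).factorial := by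
      simpa [Nat.factorial] using (by simpa [show 1 + (m-2) = m - 1 by omega] using this)
    exact_mod_cast h'
  have h4 : (2:ℝ) ^ (x - 3) ≤ (2:ℝ) ^ (m - 2 : ℕ) := by
    rw [← Real.rpow_natCast 2 (m - 2)]
    apply Real.rpow_le_rpow_of_exponent_le one_le_two
    have hfloor : x - 1 < (m : ℝ) := Nat.sub_one_lt_floor x
    have hcast : ((m - 2 : ℕ) : ℝ) = (m : ℝ) - 2 := by
      have : ((m - 2 : ℕ) : ℝ) = (m : ℝ) - ((2:ℕ):ℝ) := Nat.cast_sub hm2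
      simpa using this
    rw [hcast]; linarith
  calc (2:ℝ) ^ (x - 3) ≤ _ := h4
    _ ≤ _ := h3
    _ = _ := h2
    _ ≤ _ := h1


lemma inv_gamma_bound (a b : ℝ) (ha : 0 < a) (hb : 0 ≤ b) :
    ∃ N : ℕ, ∃ K : ℝ, 0 < K ∧ ∀ n : ℕ, N ≤ n →
      1 / Real.Gamma (a + ((n : ℝ) + 1) * b) ≤ K * (2:ℝ) ^ (-(b * n)) := by
  rcases eq_or_lt_of_le hb with hb0 | hbpos
  · refine ⟨0, 1 / Real.Gamma a, by positivity, fun n _ => ?_⟩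
    rw [← hb0]
    simp
  · refine ⟨⌈2 / b⌉₊, (2:ℝ) ^ (3 - a - b), Real.rpow_pos_of_pos two_pos _, fun n hn => ?_⟩
    have harg : 2 ≤ a + ((n : ℝ) + 1) * b := by
      have h1 : 2 / b ≤ (n : ℝ) := le_trans (Nat.le_ceil _) (by exact_mod_cast hn)
      have h2 : 2 ≤ (n : ℝ) * b := by
        rw [div_le_iff₀ hbpos] at h1; linarith
      nlinarith
    have hg := gamma_ge_two_rpow harg
    have hgpos : (0:ℝ) < (2:ℝ) ^ (a + ((n : ℝ) + 1) * b - 3) := Real.rpow_pos_of_pos two_pos _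
    have h3 : 1 / Real.Gamma (a + ((n : ℝ) + 1) * b) ≤ 1 / (2:ℝ) ^ (a + ((n : ℝ) + 1) * b - 3) :=
      one_div_le_one_div_of_le hgpos hg
    refine h3.trans (le_of_eq ?_)
    rw [one_div, ← Real.rpow_neg (le_of_lt two_pos), ← Real.rpow_add two_pos]
    ring_nf

set_option maxHeartbeats 1000000 in
lemma summable_wright_coeff (a b c d : ℝ) (ha : 0 < a) (hc : 0 < c) (hb : 0 ≤ b)
    (hd : 0 ≤ d) (hbd : 0 < b + d) :
    Summable (fun n : ℕ => Real.Gamma a * Real.Gamma c /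
      (Real.Gamma (a + ((n : ℝ) + 1) * b) * Real.Gamma (c + ((n : ℝ) + 1) * d))) := by
  obtain ⟨N₁, K₁, hK₁, h₁⟩ := inv_gamma_bound a b ha hb
  obtain ⟨N₂, K₂, hK₂, h₂⟩ := inv_gamma_bound c d hc hd
  set r : ℝ := (2:ℝ) ^ (-(b + d)) with hr
  have hr0 : 0 < r := Real.rpow_pos_of_pos two_pos _
  have hr1 : r < 1 := Real.rpow_lt_one_of_one_lt_of_neg one_lt_two (by linarith)
  set M := max N₁ N₂ with hM
  rw [← summable_nat_add_iff M]
  have hgeo : Summable (fun n : ℕ => Real.Gamma a * Real.Gamma c * K₁ * K₂ * r ^ (n + M)) := by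
    have := (summable_geometric_of_lt_one (le_of_lt hr0) hr1).mul_left
      (Real.Gamma a * Real.Gamma c * K₁ * K₂)
    exact ((summable_nat_add_iff M).2 this)
  refine hgeo.of_nonneg_of_le (fun n => ?_) (fun n => ?_)
  · have g1 : 0 < Real.Gamma (a + (((n + M : ℕ) : ℝ) + 1) * b) :=
      Real.Gamma_pos_of_pos (by positivity)
    have g2 : 0 < Real.Gamma (c + (((n + M : ℕ) : ℝ) + 1) * d) :=
      Real.Gamma_pos_of_pos (by positivity)
    have g3 : 0 < Real.Gamma a * Real.Gamma c :=
      mul_pos (Real.Gamma_pos_of_pos ha) (Real.Gamma_pos_of_pos hc)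
    exact le_of_lt (div_pos g3 (mul_pos g1 g2))
  · set m : ℕ := n + M with hm
    have hG1 : 0 < Real.Gamma (a + ((m : ℝ) + 1) * b) :=
      Real.Gamma_pos_of_pos (by positivity)
    have hG2 : 0 < Real.Gamma (c + ((m : ℝ) + 1) * d) :=
      Real.Gamma_pos_of_pos (by positivity)
    have e1 := h₁ m (le_trans (le_max_left _ _) (Nat.le_add_left M n))
    have e2 := h₂ m (le_trans (le_max_right _ _) (Nat.le_add_left M n))
    have key : 1 / Real.Gamma (a + ((m : ℝ) + 1) * b) * (1 / Real.Gamma (c + ((m : ℝ) + 1) * d))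
        ≤ (K₁ * (2:ℝ) ^ (-(b * m))) * (K₂ * (2:ℝ) ^ (-(d * m))) := by
      apply mul_le_mul e1 e2 (by positivity) (by positivity)
    have hrpow : (K₁ * (2:ℝ) ^ (-(b * m))) * (K₂ * (2:ℝ) ^ (-(d * m))) = K₁ * K₂ * r ^ m := by
      have : r ^ m = (2:ℝ) ^ (-(b + d) * (m : ℝ)) := by
        rw [hr, ← Real.rpow_natCast ((2:ℝ) ^ (-(b+d))) m, ← Real.rpow_mul (le_of_lt two_pos)]
      rw [this, show -(b + d) * (m:ℝ) = -(b * m) + -(d * m) by ring, Real.rpow_add two_pos]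
      ring
    have hΓpos : 0 < Real.Gamma a * Real.Gamma c :=
      mul_pos (Real.Gamma_pos_of_pos ha) (Real.Gamma_pos_of_pos hc)
    calc Real.Gamma a * Real.Gamma c /
        (Real.Gamma (a + ((m : ℝ) + 1) * b) * Real.Gamma (c + ((m : ℝ) + 1) * d))
        = Real.Gamma a * Real.Gamma c * (1 / Real.Gamma (a + ((m : ℝ) + 1) * b) *
          (1 / Real.Gamma (c + ((m : ℝ) + 1) * d))) := by field_simp
      _ ≤ Real.Gamma a * Real.Gamma c * ((K₁ * (2:ℝ) ^ (-(b * m))) * (K₂ * (2:ℝ) ^ (-(d * m)))) :=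
          by exact mul_le_mul_of_nonneg_left key (le_of_lt hΓpos)
      _ = Real.Gamma a * Real.Gamma c * K₁ * K₂ * r ^ m := by rw [hrpow]; ring

/-- key estimate for close-to-convexity of L(f) when
|Aₙ| ≤ 1/n, |Bₙ| ≤ 1/n (n ≥ 2) and |B₁| < 1. -/
theorem Lf_close_to_convex_coefficient_estimate (α₁ β₁ γ₁ δ₁ α₂ β₂ γ₂ δ₂ : ℝ) (A B : ℕ → ℂ)
    (hβ₁ : 0 ≤ β₁) (hδ₁ : 0 ≤ δ₁) (hβδ₁ : 0 < β₁ + δ₁)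
    (hβ₂ : 0 ≤ β₂) (hδ₂ : 0 ≤ δ₂) (hβδ₂ : 0 < β₂ + δ₂)
    (hα₁ : 0 < α₁) (hγ₁ : 0 < γ₁) (hα₂ : 0 < α₂) (hγ₂ : 0 < γ₂)
    (hA : ∀ n : ℕ, 2 ≤ n → ‖A n‖ ≤ 1 / (n : ℝ))
    (hB : ∀ n : ℕ, 2 ≤ n → ‖B n‖ ≤ 1 / (n : ℝ))
    (hB1 : ‖B 1‖ < 1)
    (hyp : wrightW α₁ β₁ γ₁ δ₁ 1 + wrightW α₂ β₂ γ₂ δ₂ 1 - 2 ≤ 1 - ‖B 1‖) :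
    ∀ ε : ℂ, ‖ε‖ = 1 →
      ∑' n : ℕ, ((n : ℝ) + 2) *
        ‖((Real.Gamma α₁ * Real.Gamma γ₁ /
            (Real.Gamma (α₁ + ((n : ℝ) + 1) * β₁) * Real.Gamma (γ₁ + ((n : ℝ) + 1) * δ₁)) : ℝ) : ℂ) * A (n + 2) / (1 + ε * B 1)
          + ε * ((Real.Gamma α₂ * Real.Gamma γ₂ /
            (Real.Gamma (α₂ + ((n : ℝ) + 1) * β₂) * Real.Gamma (γ₂ + ((n : ℝ) + 1) * δ₂)) : ℝ) : ℂ) * B (n + 2) / (1 + ε * B 1)‖ ≤ 1 := by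
  intro ε hε
  set c₁ : ℕ → ℝ := fun n => Real.Gamma α₁ * Real.Gamma γ₁ /
      (Real.Gamma (α₁ + ((n : ℝ) + 1) * β₁) * Real.Gamma (γ₁ + ((n : ℝ) + 1) * δ₁)) with hc₁
  set c₂ : ℕ → ℝ := fun n => Real.Gamma α₂ * Real.Gamma γ₂ /
      (Real.Gamma (α₂ + ((n : ℝ) + 1) * β₂) * Real.Gamma (γ₂ + ((n : ℝ) + 1) * δ₂)) with hc₂
  have hS₁ : Summable c₁ := summable_wright_coeff α₁ β₁ γ₁ δ₁ hα₁ hγ₁ hβ₁ hδ₁ hβδ₁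
  have hS₂ : Summable c₂ := summable_wright_coeff α₂ β₂ γ₂ δ₂ hα₂ hγ₂ hβ₂ hδ₂ hβδ₂
  have hc₁nn : ∀ n : ℕ, 0 ≤ c₁ n := fun n => by
    have g1 : 0 < Real.Gamma (α₁ + ((n : ℝ) + 1) * β₁) := Real.Gamma_pos_of_pos (by positivity)
    have g2 : 0 < Real.Gamma (γ₁ + ((n : ℝ) + 1) * δ₁) := Real.Gamma_pos_of_pos (by positivity)
    have g3 : 0 < Real.Gamma α₁ * Real.Gamma γ₁ :=
      mul_pos (Real.Gamma_pos_of_pos hα₁) (Real.Gamma_pos_of_pos hγ₁)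
    exact le_of_lt (div_pos g3 (mul_pos g1 g2))
  have hc₂nn : ∀ n : ℕ, 0 ≤ c₂ n := fun n => by
    have g1 : 0 < Real.Gamma (α₂ + ((n : ℝ) + 1) * β₂) := Real.Gamma_pos_of_pos (by positivity)
    have g2 : 0 < Real.Gamma (γ₂ + ((n : ℝ) + 1) * δ₂) := Real.Gamma_pos_of_pos (by positivity)
    have g3 : 0 < Real.Gamma α₂ * Real.Gamma γ₂ :=
      mul_pos (Real.Gamma_pos_of_pos hα₂) (Real.Gamma_pos_of_pos hγ₂)
    exact le_of_lt (div_pos g3 (mul_pos g1 g2))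
  have hb1 : 0 < 1 - ‖B 1‖ := by linarith
  have hεB : ‖ε * B 1‖ = ‖B 1‖ := by rw [norm_mul, hε, one_mul]
  have hden : 1 - ‖B 1‖ ≤ ‖1 + ε * B 1‖ := by
    have h := norm_add_le (1 + ε * B 1) (-(ε * B 1))
    simp only [add_neg_cancel_right, norm_one, norm_neg] at h
    rw [hεB] at h; linarith
  have hD : 0 < ‖1 + ε * B 1‖ := lt_of_lt_of_le hb1 hden
  -- rewrite hyp
  have hhyp : ∑' n, c₁ n + ∑' n, c₂ n ≤ 1 - ‖B 1‖ := by
    simp only [wrightW, one_pow, mul_one] at hyp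
    linarith
  -- per-term bound
  have key : ∀ n : ℕ, ((n : ℝ) + 2) *
      ‖(↑(c₁ n) : ℂ) * A (n + 2) / (1 + ε * B 1)
        + ε * (↑(c₂ n) : ℂ) * B (n + 2) / (1 + ε * B 1)‖
      ≤ (c₁ n + c₂ n) / (1 - ‖B 1‖) := by
    intro n
    have hn2 : (0:ℝ) < (n : ℝ) + 2 := by positivity
    have hAn : ‖A (n + 2)‖ ≤ 1 / ((n : ℝ) + 2) := by
      have := hA (n + 2) (by omega); push_cast at this ⊢; linarith
    have hBn : ‖B (n + 2)‖ ≤ 1 / ((n : ℝ) + 2) := by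
      have := hB (n + 2) (by omega); push_cast at this ⊢; linarith
    have hnorm : ‖(↑(c₁ n) : ℂ) * A (n + 2) / (1 + ε * B 1)
        + ε * (↑(c₂ n) : ℂ) * B (n + 2) / (1 + ε * B 1)‖
        ≤ (c₁ n * ‖A (n + 2)‖ + c₂ n * ‖B (n + 2)‖) / ‖1 + ε * B 1‖ := by
      calc _ ≤ ‖(↑(c₁ n) : ℂ) * A (n + 2) / (1 + ε * B 1)‖
            + ‖ε * (↑(c₂ n) : ℂ) * B (n + 2) / (1 + ε * B 1)‖ := norm_add_le _ _
        _ = (c₁ n * ‖A (n + 2)‖ + c₂ n * ‖B (n + 2)‖) / ‖1 + ε * B 1‖ := by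
            rw [norm_div, norm_div, norm_mul, norm_mul, norm_mul, hε,
              Complex.norm_real, Complex.norm_real, Real.norm_eq_abs, Real.norm_eq_abs,
              abs_of_nonneg (hc₁nn n), abs_of_nonneg (hc₂nn n), one_mul, add_div]
    calc ((n : ℝ) + 2) * ‖(↑(c₁ n) : ℂ) * A (n + 2) / (1 + ε * B 1)
          + ε * (↑(c₂ n) : ℂ) * B (n + 2) / (1 + ε * B 1)‖
        ≤ ((n : ℝ) + 2) * ((c₁ n * (1 / ((n:ℝ)+2)) + c₂ n * (1 / ((n:ℝ)+2))) / (1 - ‖B 1‖)) := by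
          refine mul_le_mul_of_nonneg_left ?_ (le_of_lt hn2)
          refine le_trans hnorm ?_
          apply div_le_div₀ (by positivity) ?_ hb1 hden
          exact add_le_add (mul_le_mul_of_nonneg_left hAn (hc₁nn n))
            (mul_le_mul_of_nonneg_left hBn (hc₂nn n))
      _ = (c₁ n + c₂ n) / (1 - ‖B 1‖) := by
          have e : ∀ u v : ℝ, ((n : ℝ) + 2) * ((u * (1 / ((n:ℝ)+2)) + v * (1 / ((n:ℝ)+2))) / (1 - ‖B 1‖))
              = (u + v) / (1 - ‖B 1‖) := by
            intro u v
            rw [show u * (1 / ((n:ℝ)+2)) + v * (1 / ((n:ℝ)+2)) = (u + v) / ((n:ℝ)+2) by ring,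
              div_div, mul_div_assoc']
            rw [mul_div_mul_left _ _ hn2.ne']
          exact e _ _
  -- summability of the LHS
  have hsumR : Summable (fun n => (c₁ n + c₂ n) / (1 - ‖B 1‖)) := (hS₁.add hS₂).div_const _
  have hsumL : Summable (fun n : ℕ => ((n : ℝ) + 2) *
      ‖(↑(c₁ n) : ℂ) * A (n + 2) / (1 + ε * B 1)
        + ε * (↑(c₂ n) : ℂ) * B (n + 2) / (1 + ε * B 1)‖) :=
    hsumR.of_nonneg_of_le (fun n => by positivity) key
  calc ∑' n : ℕ, ((n : ℝ) + 2) *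
      ‖(↑(c₁ n) : ℂ) * A (n + 2) / (1 + ε * B 1)
        + ε * (↑(c₂ n) : ℂ) * B (n + 2) / (1 + ε * B 1)‖
      ≤ ∑' n, (c₁ n + c₂ n) / (1 - ‖B 1‖) := Summable.tsum_le_tsum key hsumL hsumR
    _ = (∑' n, c₁ n + ∑' n, c₂ n) / (1 - ‖B 1‖) := by rw [tsum_div_const, Summable.tsum_add hS₁ hS₂]
    _ ≤ 1 := by rw [div_le_one hb1]; exact hhyp
end
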